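/- (Anisotropic Sobolev inequality) There exists a constant C > 0 such that for every smooth compactly supported function f on ℝ³, ‖f‖_{L⁶(ℝ³)} ≤ C ‖∇_h f‖_{L²}^{2/3} ‖∂₃ f‖_{L²}^{1/3}, where ∇_h f = (∂₁f, ∂₂f) is the horizontal gradient. -/

import Mathlib

open MeasureTheory
open scoped NNReal ENNReal

/-- Partial derivative in the `i`-th coordinate direction on `ℝ³`. -/
noncomputable def pd (i : Fin 3) (f : (Fin 3 → ℝ) → ℝ) : (Fin 3 → ℝ) → ℝ :=
  fun x => fderiv ℝ f x (Pi.single i 1)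

lemma pd_cont {f : (Fin 3 → ℝ) → ℝ} (hf : ContDiff ℝ (⊤ : ℕ∞) f) (i : Fin 3) :
    Continuous (pd i f) := by
  have h := (hf.fderiv_right (m := 0) (by simp)).continuous
  exact (ContinuousLinearMap.apply ℝ ℝ (Pi.single i 1)).continuous.comp h

lemma pd_cs {f : (Fin 3 → ℝ) → ℝ} (h2f : HasCompactSupport f) (i : Fin 3) :
    HasCompactSupport (pd i f) := by
  have h := h2f.fderiv ℝ
  exact h.comp_left (g := fun L : (Fin 3 → ℝ) →L[ℝ] ℝ => L (Pi.single i 1)) rfl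

lemma pd_sq_cs {f : (Fin 3 → ℝ) → ℝ} (h2f : HasCompactSupport f) (i : Fin 3) :
    HasCompactSupport (fun x => pd i f x ^ 2) := by
  exact (pd_cs h2f i).comp_left (g := fun y : ℝ => y ^ 2) (by norm_num)

lemma pd_sq_int {f : (Fin 3 → ℝ) → ℝ} (hf : ContDiff ℝ (⊤ : ℕ∞) f) (h2f : HasCompactSupport f)
    (i : Fin 3) : Integrable (fun x => pd i f x ^ 2) :=
  ((pd_cont hf i).pow 2).integrable_of_hasCompactSupport (pd_sq_cs h2f i)

lemma fderiv_apply_eq {f : (Fin 3 → ℝ) → ℝ} (hf : ContDiff ℝ (⊤ : ℕ∞) f) (x v : Fin 3 → ℝ) :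
    fderiv ℝ f x v = v 0 * pd 0 f x + v 1 * pd 1 f x + v 2 * pd 2 f x := by
  have hv : v = v 0 • (Pi.single 0 1 : Fin 3 → ℝ) + v 1 • (Pi.single 1 1 : Fin 3 → ℝ) + v 2 • (Pi.single 2 1 : Fin 3 → ℝ) := by
    ext i; fin_cases i <;> simp
  conv_lhs => rw [hv]
  simp [pd, smul_eq_mul]

lemma norm_fderiv_le {f : (Fin 3 → ℝ) → ℝ} (hf : ContDiff ℝ (⊤ : ℕ∞) f) (x : Fin 3 → ℝ) :
    ‖fderiv ℝ f x‖ ≤ |pd 0 f x| + |pd 1 f x| + |pd 2 f x| := by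
  refine ContinuousLinearMap.opNorm_le_bound _ (by positivity) fun v => ?_
  rw [fderiv_apply_eq hf]
  have h0 : |v 0| ≤ ‖v‖ := norm_le_pi_norm v 0
  have h1 : |v 1| ≤ ‖v‖ := norm_le_pi_norm v 1
  have h2 : |v 2| ≤ ‖v‖ := norm_le_pi_norm v 2
  calc |v 0 * pd 0 f x + v 1 * pd 1 f x + v 2 * pd 2 f x|
      ≤ |v 0 * pd 0 f x| + |v 1 * pd 1 f x| + |v 2 * pd 2 f x| := by
        exact (abs_add_le _ _).trans (by gcongr; exact abs_add_le _ _)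
    _ ≤ ‖v‖ * |pd 0 f x| + ‖v‖ * |pd 1 f x| + ‖v‖ * |pd 2 f x| := by
        simp only [abs_mul]; gcongr <;> positivity
    _ = (|pd 0 f x| + |pd 1 f x| + |pd 2 f x|) * ‖v‖ := by ring

lemma sq_norm_fderiv_le {f : (Fin 3 → ℝ) → ℝ} (hf : ContDiff ℝ (⊤ : ℕ∞) f) (x : Fin 3 → ℝ) :
    ‖fderiv ℝ f x‖ ^ 2 ≤ 3 * (pd 0 f x ^ 2 + pd 1 f x ^ 2 + pd 2 f x ^ 2) := by
  have h := norm_fderiv_le hf x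
  have h0 : (0:ℝ) ≤ ‖fderiv ℝ f x‖ := norm_nonneg _
  nlinarith [sq_abs (pd 0 f x), sq_abs (pd 1 f x), sq_abs (pd 2 f x),
    sq_nonneg (|pd 0 f x| - |pd 1 f x|), sq_nonneg (|pd 0 f x| - |pd 2 f x|),
    sq_nonneg (|pd 1 f x| - |pd 2 f x|), abs_nonneg (pd 0 f x), abs_nonneg (pd 1 f x),
    abs_nonneg (pd 2 f x)]

lemma iso_sobolev : ∃ C > 0, ∀ f : (Fin 3 → ℝ) → ℝ, ContDiff ℝ (⊤ : ℕ∞) f → HasCompactSupport f →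
    (∫ x, |f x| ^ (6 : ℝ)) ^ ((1 : ℝ) / 6) ≤
      C * Real.sqrt (∫ x, (pd 0 f x ^ 2 + pd 1 f x ^ 2 + pd 2 f x ^ 2)) := by
  set c : ℝ≥0 := eLpNormLESNormFDerivOfEqInnerConst (volume : Measure (Fin 3 → ℝ)) 2 with hc
  refine ⟨(max (c:ℝ) 1) * Real.sqrt 3, by positivity, fun f hf h2f => ?_⟩
  have memf : MemLp f ((6:ℝ≥0):ℝ≥0∞) volume :=
    hf.continuous.memLp_of_hasCompactSupport h2f
  have memDf : MemLp (fderiv ℝ f) ((2:ℝ≥0):ℝ≥0∞) volume :=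
    (hf.continuous_fderiv (by simp)).memLp_of_hasCompactSupport (h2f.fderiv ℝ)
  have key : eLpNorm f ((6:ℝ≥0):ℝ≥0∞) volume ≤
      ↑c * eLpNorm (fderiv ℝ f) ((2:ℝ≥0):ℝ≥0∞) volume := by
    refine eLpNorm_le_eLpNorm_fderiv_of_eq_inner volume (hf.of_le (by simp)) h2f
      (p := 2) (p' := 6) one_le_two ?_ ?_
    · simp [Module.finrank_fintype_fun_eq_card]
    · rw [Module.finrank_fintype_fun_eq_card]; norm_num
  rw [memf.eLpNorm_eq_integral_rpow_norm (by norm_num) (by norm_num),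
      memDf.eLpNorm_eq_integral_rpow_norm (by norm_num) (by norm_num)] at key
  have h6 : (((6:ℝ≥0):ℝ≥0∞)).toReal = (6:ℝ) := by norm_num
  have h2 : (((2:ℝ≥0):ℝ≥0∞)).toReal = (2:ℝ) := by norm_num
  rw [h6, h2] at key
  set A : ℝ := (∫ a, ‖f a‖ ^ (6:ℝ)) ^ ((6:ℝ)⁻¹) with hA
  set B : ℝ := (∫ a, ‖fderiv ℝ f a‖ ^ (2:ℝ)) ^ ((2:ℝ)⁻¹) with hB
  have hAnn : 0 ≤ A := by
    apply Real.rpow_nonneg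
    apply integral_nonneg; intro a; positivity
  have hBnn : 0 ≤ B := by
    apply Real.rpow_nonneg
    apply integral_nonneg; intro a; positivity
  have key' : A ≤ (c:ℝ) * B := by
    have := ENNReal.toReal_mono (by finiteness) key
    rwa [ENNReal.toReal_mul, ENNReal.toReal_ofReal hAnn, ENNReal.coe_toReal,
      ENNReal.toReal_ofReal hBnn] at this
  set S : ℝ := ∫ x, (pd 0 f x ^ 2 + pd 1 f x ^ 2 + pd 2 f x ^ 2) with hS
  have hSnn : 0 ≤ S := by
    apply integral_nonneg; intro a; positivity
  have hintS : Integrable (fun x => pd 0 f x ^ 2 + pd 1 f x ^ 2 + pd 2 f x ^ 2) :=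
    ((pd_sq_int hf h2f 0).add (pd_sq_int hf h2f 1)).add (pd_sq_int hf h2f 2)
  have hint2 : Integrable (fun x => ‖fderiv ℝ f x‖ ^ 2) := by
    refine ((hf.continuous_fderiv (by simp)).norm.pow 2).integrable_of_hasCompactSupport ?_
    simpa [sq] using HasCompactSupport.mul_left ((h2f.fderiv ℝ).norm)
  have hle : (∫ a, ‖fderiv ℝ f a‖ ^ (2:ℝ)) ≤ 3 * S := by
    simp_rw [Real.rpow_two]
    calc (∫ a, ‖fderiv ℝ f a‖ ^ 2)
        ≤ ∫ x, 3 * (pd 0 f x ^ 2 + pd 1 f x ^ 2 + pd 2 f x ^ 2) :=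
          integral_mono hint2 (hintS.const_mul 3) (fun x => sq_norm_fderiv_le hf x)
      _ = 3 * S := integral_const_mul 3 _
  have hB2 : B ≤ Real.sqrt 3 * Real.sqrt S := by
    have h1 : B ≤ (3 * S) ^ ((2:ℝ)⁻¹) := by
      refine Real.rpow_le_rpow ?_ hle (by norm_num)
      apply integral_nonneg; intro a; positivity
    rwa [show ((2:ℝ)⁻¹) = 1/2 by norm_num, ← Real.sqrt_eq_rpow,
      Real.sqrt_mul (by norm_num : (0:ℝ) ≤ 3)] at h1
  calc (∫ x, |f x| ^ (6 : ℝ)) ^ ((1 : ℝ) / 6) = A := by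
        rw [hA]; simp [Real.norm_eq_abs, one_div]
    _ ≤ (c:ℝ) * B := key'
    _ ≤ (c:ℝ) * (Real.sqrt 3 * Real.sqrt S) :=
        mul_le_mul_of_nonneg_left hB2 c.coe_nonneg
    _ ≤ max (c:ℝ) 1 * Real.sqrt 3 * Real.sqrt S := by
        rw [mul_assoc]
        exact mul_le_mul_of_nonneg_right (le_max_left _ _) (by positivity)


noncomputable def dil (l : ℝ) : (Fin 3 → ℝ) →ₗ[ℝ] (Fin 3 → ℝ) :=
  Matrix.toLin' (Matrix.diagonal ![1, 1, l])

lemma dil_apply (l : ℝ) (x : Fin 3 → ℝ) (i : Fin 3) :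
    dil l x i = ![1, 1, l] i * x i := by
  simp [dil, Matrix.toLin'_apply, Matrix.mulVec_diagonal]

lemma dil_det (l : ℝ) : LinearMap.det (dil l) = l := by
  rw [dil, LinearMap.det_toLin', Matrix.det_diagonal]
  simp [Fin.prod_univ_three]

lemma dil_comp (l : ℝ) (hl : l ≠ 0) : (dil l) ∘ₗ (dil l⁻¹) = LinearMap.id := by
  rw [dil, dil, ← Matrix.toLin'_mul, Matrix.diagonal_mul_diagonal]
  have : (fun i => ![1,1,l] i * ![1,1,l⁻¹] i) = (1 : Fin 3 → ℝ) := by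
    funext i; fin_cases i <;> simp [mul_inv_cancel₀ hl]
  rw [this]
  have h2 : Matrix.diagonal (1 : Fin 3 → ℝ) = (1 : Matrix (Fin 3) (Fin 3) ℝ) :=
    Matrix.diagonal_one
  rw [h2, Matrix.toLin'_one]

noncomputable def dilE (l : ℝ) (hl : l ≠ 0) : (Fin 3 → ℝ) ≃L[ℝ] (Fin 3 → ℝ) :=
  LinearEquiv.toContinuousLinearEquiv <|
    LinearEquiv.ofLinear (dil l) (dil l⁻¹) (dil_comp l hl)
      (by simpa [inv_inv] using dil_comp l⁻¹ (inv_ne_zero hl))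

lemma dilE_apply (l : ℝ) (hl : l ≠ 0) (x : Fin 3 → ℝ) (i : Fin 3) :
    dilE l hl x i = ![1, 1, l] i * x i := dil_apply l x i

-- change of variables
lemma cov (l : ℝ) (hl : 0 < l) (h : (Fin 3 → ℝ) → ℝ) (hc : Continuous h) :
    ∫ x, h (dilE l hl.ne' x) = l⁻¹ * ∫ x, h x := by
  have hdet : LinearMap.det (dil l) ≠ 0 := by rw [dil_det]; exact hl.ne'
  have hmap := Measure.map_linearMap_addHaar_eq_smul_addHaar
    (volume : Measure (Fin 3 → ℝ)) hdet
  have hmeas : Measurable (dil l) := (dil l).continuous_of_finiteDimensional.measurable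
  have h1 : ∫ x, h (dil l x) = ∫ y, h y ∂(Measure.map (dil l) volume) :=
    (integral_map hmeas.aemeasurable hc.aestronglyMeasurable).symm
  have : ∫ x, h (dilE l hl.ne' x) = ∫ x, h (dil l x) := rfl
  rw [this, h1, hmap, dil_det, integral_smul_measure]
  rw [ENNReal.toReal_ofReal (by positivity)]
  rw [abs_of_nonneg (by positivity)]
  simp [smul_eq_mul]

lemma dilE_single (l : ℝ) (hl : l ≠ 0) (i : Fin 3) :
    dilE l hl (Pi.single i 1) = ![1, 1, l] i • (Pi.single i 1 : Fin 3 → ℝ) := by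
  funext j
  rw [dilE_apply]
  rcases eq_or_ne j i with rfl | hj
  · simp
  · simp [Pi.single_eq_of_ne hj]

lemma pd_comp_dilE {f : (Fin 3 → ℝ) → ℝ} (hf : ContDiff ℝ (⊤ : ℕ∞) f) (l : ℝ) (hl : l ≠ 0)
    (i : Fin 3) (x : Fin 3 → ℝ) :
    pd i (fun y => f (dilE l hl y)) x = ![1, 1, l] i * pd i f (dilE l hl x) := by
  have hdf : DifferentiableAt ℝ f (dilE l hl x) :=
    (hf.differentiable (by simp)).differentiableAt
  have hde : DifferentiableAt ℝ (dilE l hl : (Fin 3 → ℝ) → (Fin 3 → ℝ)) x :=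
    (dilE l hl).differentiableAt
  have hcomp : fderiv ℝ (fun y => f (dilE l hl y)) x =
      (fderiv ℝ f (dilE l hl x)).comp (fderiv ℝ (dilE l hl : (Fin 3 → ℝ) → (Fin 3 → ℝ)) x) :=
    fderiv_comp x hdf hde
  have hfe : fderiv ℝ (dilE l hl : (Fin 3 → ℝ) → (Fin 3 → ℝ)) x
      = (dilE l hl : (Fin 3 → ℝ) →L[ℝ] (Fin 3 → ℝ)) := (dilE l hl).fderiv
  rw [pd, hcomp, hfe]
  simp only [ContinuousLinearMap.coe_comp', Function.comp_apply,
    ContinuousLinearEquiv.coe_coe]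
  rw [dilE_single l hl i, _root_.map_smul]
  simp [pd, smul_eq_mul]

lemma key_bound {C : ℝ} (hC : 0 < C)
    (hiso : ∀ f : (Fin 3 → ℝ) → ℝ, ContDiff ℝ (⊤ : ℕ∞) f → HasCompactSupport f →
      (∫ x, |f x| ^ (6 : ℝ)) ^ ((1 : ℝ) / 6) ≤
        C * Real.sqrt (∫ x, (pd 0 f x ^ 2 + pd 1 f x ^ 2 + pd 2 f x ^ 2)))
    {f : (Fin 3 → ℝ) → ℝ} (hf : ContDiff ℝ (⊤ : ℕ∞) f) (h2f : HasCompactSupport f)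
    {l : ℝ} (hl : 0 < l) :
    (∫ x, |f x| ^ (6 : ℝ)) ^ ((1 : ℝ) / 6) ≤
      C * l ^ ((1 : ℝ) / 6) *
        Real.sqrt (l⁻¹ * (∫ x, (pd 0 f x ^ 2 + pd 1 f x ^ 2)) + l * ∫ x, pd 2 f x ^ 2) := by
  set e := dilE l hl.ne' with he
  set g : (Fin 3 → ℝ) → ℝ := fun y => f (e y) with hg
  have hgc : ContDiff ℝ (⊤ : ℕ∞) g := hf.comp (e : (Fin 3 → ℝ) →L[ℝ] (Fin 3 → ℝ)).contDiff
  have h2g : HasCompactSupport g := h2f.comp_homeomorph e.toHomeomorph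
  have hI : (∫ x, |g x| ^ (6 : ℝ)) = l⁻¹ * ∫ x, |f x| ^ (6 : ℝ) := by
    exact cov l hl _ (hf.continuous.abs.rpow_const (fun y => Or.inr (by norm_num)))
  have hpd : ∀ x, pd 0 g x ^ 2 + pd 1 g x ^ 2 + pd 2 g x ^ 2 =
      pd 0 f (e x) ^ 2 + pd 1 f (e x) ^ 2 + l ^ 2 * pd 2 f (e x) ^ 2 := by
    intro x
    rw [hg, pd_comp_dilE hf l hl.ne' 0 x, pd_comp_dilE hf l hl.ne' 1 x,
      pd_comp_dilE hf l hl.ne' 2 x]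
    simp only [Matrix.cons_val_zero, Matrix.cons_val_one, Matrix.head_cons,
      Matrix.cons_val_two, Matrix.tail_cons]
    ring
  have hcov2 : (∫ x, (pd 0 g x ^ 2 + pd 1 g x ^ 2 + pd 2 g x ^ 2)) =
      l⁻¹ * ∫ y, (pd 0 f y ^ 2 + pd 1 f y ^ 2 + l ^ 2 * pd 2 f y ^ 2) := by
    rw [show (fun x => pd 0 g x ^ 2 + pd 1 g x ^ 2 + pd 2 g x ^ 2) =
        (fun x => pd 0 f (e x) ^ 2 + pd 1 f (e x) ^ 2 + l ^ 2 * pd 2 f (e x) ^ 2)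
      from funext hpd]
    refine cov l hl (fun y => pd 0 f y ^ 2 + pd 1 f y ^ 2 + l ^ 2 * pd 2 f y ^ 2) ?_
    exact (((pd_cont hf 0).pow 2).add ((pd_cont hf 1).pow 2)).add
      (continuous_const.mul ((pd_cont hf 2).pow 2))
  have hsplit : (∫ y, (pd 0 f y ^ 2 + pd 1 f y ^ 2 + l ^ 2 * pd 2 f y ^ 2)) =
      (∫ x, (pd 0 f x ^ 2 + pd 1 f x ^ 2)) + l ^ 2 * ∫ x, pd 2 f x ^ 2 := by
    have h01 : Integrable (fun x => pd 0 f x ^ 2 + pd 1 f x ^ 2) :=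
      (pd_sq_int hf h2f 0).add (pd_sq_int hf h2f 1)
    have h2i : Integrable (fun x => l ^ 2 * pd 2 f x ^ 2) :=
      (pd_sq_int hf h2f 2).const_mul _
    rw [integral_add h01 h2i, integral_const_mul]
  have hiso_g := hiso g hgc h2g
  rw [hI, hcov2, hsplit] at hiso_g
  have harg : l⁻¹ * ((∫ x, (pd 0 f x ^ 2 + pd 1 f x ^ 2)) + l ^ 2 * ∫ x, pd 2 f x ^ 2) =
      l⁻¹ * (∫ x, (pd 0 f x ^ 2 + pd 1 f x ^ 2)) + l * ∫ x, pd 2 f x ^ 2 := by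
    field_simp
  rw [harg] at hiso_g
  -- multiply both sides by l^(1/6)
  have hInn : 0 ≤ ∫ x, |f x| ^ (6 : ℝ) := integral_nonneg fun a => by positivity
  have hmul := mul_le_mul_of_nonneg_left hiso_g
    (Real.rpow_nonneg hl.le ((1:ℝ)/6))
  calc (∫ x, |f x| ^ (6 : ℝ)) ^ ((1 : ℝ) / 6)
      = l ^ ((1:ℝ)/6) * (l⁻¹ * ∫ x, |f x| ^ (6 : ℝ)) ^ ((1 : ℝ) / 6) := by
        rw [← Real.mul_rpow hl.le (by positivity), ← mul_assoc,
          mul_inv_cancel₀ hl.ne', one_mul]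
    _ ≤ l ^ ((1:ℝ)/6) * (C * Real.sqrt (l⁻¹ * (∫ x, (pd 0 f x ^ 2 + pd 1 f x ^ 2)) +
          l * ∫ x, pd 2 f x ^ 2)) := hmul
    _ = C * l ^ ((1 : ℝ) / 6) * Real.sqrt (l⁻¹ * (∫ x, (pd 0 f x ^ 2 + pd 1 f x ^ 2)) +
          l * ∫ x, pd 2 f x ^ 2) := by ring

/-- anisotropic Sobolev inequality on `ℝ³`:
`‖f‖_{L⁶} ≤ C ‖∇_h f‖_{L²}^{2/3} ‖∂₃ f‖_{L²}^{1/3}` for smooth compactly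
supported `f`, where `∇_h f = (∂₁ f, ∂₂ f)`. -/
theorem anisotropic_sobolev :
    ∃ C > 0, ∀ f : (Fin 3 → ℝ) → ℝ, ContDiff ℝ (⊤ : ℕ∞) f → HasCompactSupport f →
      (∫ x, |f x| ^ (6 : ℝ)) ^ ((1 : ℝ) / 6) ≤
        C * (Real.sqrt (∫ x, ((pd 0 f x) ^ 2 + (pd 1 f x) ^ 2))) ^ ((2 : ℝ) / 3) *
          (Real.sqrt (∫ x, (pd 2 f x) ^ 2)) ^ ((1 : ℝ) / 3) := by
  obtain ⟨C, hC, hiso⟩ := iso_sobolev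
  refine ⟨C * Real.sqrt 2, by positivity, fun f hf h2f => ?_⟩
  set H : ℝ := ∫ x, ((pd 0 f x) ^ 2 + (pd 1 f x) ^ 2) with hHdef
  set V : ℝ := ∫ x, (pd 2 f x) ^ 2 with hVdef
  have hH : 0 ≤ H := integral_nonneg fun x => by positivity
  have hV : 0 ≤ V := integral_nonneg fun x => by positivity
  set a : ℝ := Real.sqrt H with hadef
  set b : ℝ := Real.sqrt V with hbdef
  have ha : 0 ≤ a := Real.sqrt_nonneg _
  have hb : 0 ≤ b := Real.sqrt_nonneg _
  have key : ∀ l : ℝ, 0 < l → (∫ x, |f x| ^ (6 : ℝ)) ^ ((1 : ℝ) / 6) ≤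
      C * l ^ ((1 : ℝ) / 6) * Real.sqrt (l⁻¹ * H + l * V) :=
    fun l hl => key_bound hC hiso hf h2f hl
  rcases eq_or_lt_of_le ha with ha0 | hapos
  · -- horizontal gradient vanishes
    have hH0 : H = 0 := (Real.sqrt_eq_zero hH).mp ha0.symm
    have hle0 : (∫ x, |f x| ^ (6 : ℝ)) ^ ((1 : ℝ) / 6) ≤ 0 := by
      have t1 : Filter.Tendsto (fun l : ℝ => l ^ ((1:ℝ)/6)) (nhds 0) (nhds 0) := by
        have := (Real.continuousAt_rpow_const 0 ((1:ℝ)/6) (Or.inr (by norm_num))).tendsto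
        simpa [Real.zero_rpow (by norm_num : ((1:ℝ)/6) ≠ 0)] using this
      have t2 : Filter.Tendsto (fun l : ℝ => Real.sqrt (l * V)) (nhds 0) (nhds 0) := by
        have hcont : Continuous fun l : ℝ => Real.sqrt (l * V) :=
          Real.continuous_sqrt.comp (continuous_id.mul continuous_const)
        simpa using hcont.tendsto 0
      have htend : Filter.Tendsto (fun l : ℝ => C * l ^ ((1:ℝ)/6) * Real.sqrt (l * V))
          (nhdsWithin 0 (Set.Ioi 0)) (nhds 0) := by
        have h3 := ((tendsto_const_nhds (x := C) (f := nhds (0:ℝ))).mul t1).mul t2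
        simp only [mul_zero, zero_mul] at h3
        have h4 : Filter.Tendsto (fun l : ℝ => C * l ^ ((1:ℝ)/6) * Real.sqrt (l * V))
            (nhds 0) (nhds 0) := by simpa [mul_assoc] using h3
        exact h4.mono_left nhdsWithin_le_nhds
      refine ge_of_tendsto htend ?_
      filter_upwards [self_mem_nhdsWithin] with l hl
      have hk := key l hl
      rw [hH0] at hk
      simpa using hk
    have hz : a ^ ((2:ℝ)/3) = 0 := by
      rw [← ha0, Real.zero_rpow (by norm_num : ((2:ℝ)/3) ≠ 0)]
    calc (∫ x, |f x| ^ (6 : ℝ)) ^ ((1 : ℝ) / 6) ≤ 0 := hle0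
      _ = C * Real.sqrt 2 * a ^ ((2:ℝ)/3) * b ^ ((1:ℝ)/3) := by rw [hz]; ring
  rcases eq_or_lt_of_le hb with hb0 | hbpos
  · -- vertical derivative vanishes
    have hV0 : V = 0 := (Real.sqrt_eq_zero hV).mp hb0.symm
    have hle0 : (∫ x, |f x| ^ (6 : ℝ)) ^ ((1 : ℝ) / 6) ≤ 0 := by
      have htend : Filter.Tendsto (fun l : ℝ => C * l ^ ((1:ℝ)/6) * Real.sqrt (l⁻¹ * H))
          Filter.atTop (nhds 0) := by
        have hbase : Filter.Tendsto (fun l : ℝ => l ^ (-((1:ℝ)/3))) Filter.atTop (nhds 0) :=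
          tendsto_rpow_neg_atTop (by norm_num)
        have hmul : Filter.Tendsto (fun l : ℝ => (C * a) * l ^ (-((1:ℝ)/3)))
            Filter.atTop (nhds 0) := by
          simpa using hbase.const_mul (C * a)
        refine hmul.congr' ?_
        filter_upwards [Filter.eventually_gt_atTop 0] with l hl
        have hsq : Real.sqrt (l⁻¹ * H) = l ^ (-((1:ℝ)/2)) * a := by
          rw [Real.sqrt_mul (by positivity), ← hadef]
          congr 1
          rw [Real.sqrt_inv, Real.sqrt_eq_rpow, ← Real.rpow_neg hl.le]
        rw [hsq]
        rw [show C * a * l ^ (-((1:ℝ)/3)) = C * (l ^ ((1:ℝ)/6) * l ^ (-((1:ℝ)/2))) * a from by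
          rw [← Real.rpow_add hl]; norm_num; ring]
        ring
      refine ge_of_tendsto htend ?_
      filter_upwards [Filter.eventually_gt_atTop 0] with l hl
      have hk := key l hl
      rw [hV0] at hk
      simpa using hk
    have hz : b ^ ((1:ℝ)/3) = 0 := by
      rw [← hb0, Real.zero_rpow (by norm_num : ((1:ℝ)/3) ≠ 0)]
    calc (∫ x, |f x| ^ (6 : ℝ)) ^ ((1 : ℝ) / 6) ≤ 0 := hle0
      _ = C * Real.sqrt 2 * a ^ ((2:ℝ)/3) * b ^ ((1:ℝ)/3) := by rw [hz]; ring
  · -- main case: optimize l = a / b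
    have hl : 0 < a / b := div_pos hapos hbpos
    have hk := key (a / b) hl
    have hHa : H = a ^ 2 := (Real.sq_sqrt hH).symm
    have hVb : V = b ^ 2 := (Real.sq_sqrt hV).symm
    have harg : (a/b)⁻¹ * H + (a/b) * V = 2 * (a * b) := by
      rw [hHa, hVb]
      field_simp
      ring
    rw [harg] at hk
    have e1 : (a/b) ^ ((1:ℝ)/6) * (a ^ ((1:ℝ)/2) * b ^ ((1:ℝ)/2)) =
        a ^ ((2:ℝ)/3) * b ^ ((1:ℝ)/3) := by
      rw [Real.div_rpow ha hb]
      rw [show a ^ ((1:ℝ)/6) / b ^ ((1:ℝ)/6) * (a ^ ((1:ℝ)/2) * b ^ ((1:ℝ)/2)) =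
        (a ^ ((1:ℝ)/6) * a ^ ((1:ℝ)/2)) * (b ^ ((1:ℝ)/2) / b ^ ((1:ℝ)/6)) from by ring]
      rw [← Real.rpow_add hapos, ← Real.rpow_sub hbpos]
      norm_num
    calc (∫ x, |f x| ^ (6 : ℝ)) ^ ((1 : ℝ) / 6)
        ≤ C * (a/b) ^ ((1:ℝ)/6) * Real.sqrt (2 * (a * b)) := hk
      _ = C * Real.sqrt 2 * ((a/b) ^ ((1:ℝ)/6) * (a ^ ((1:ℝ)/2) * b ^ ((1:ℝ)/2))) := by
          rw [Real.sqrt_mul (by norm_num : (0:ℝ) ≤ 2), Real.sqrt_mul ha,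
            Real.sqrt_eq_rpow a, Real.sqrt_eq_rpow b]
          ring
      _ = C * Real.sqrt 2 * a ^ ((2:ℝ)/3) * b ^ ((1:ℝ)/3) := by rw [e1]; ring
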